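/- Define f : ℝ → ℝ by f(x) = x²(2 + cos(1/x)) for x ≠ 0 and f(0) = 0. Then f does not satisfy the level-set subdifferential error bound at 0 with any exponent γ ∈ [0, ∞): there is a sequence x_k → 0 with x_k ≠ 0 and f'(x_k) = 0 for all k, while d(x_k, lev_{≤0} f) = |x_k| > 0. -/

import Mathlib

open Filter Topology Set
open scoped ENNReal NNReal RealInnerProductSpace

noncomputable section

variable {E : Type*} [NormedAddCommGroup E] [InnerProductSpace ℝ E]

/-- Fréchet (regular) subdifferential of an `EReal`-valued function. -/
def fsubd (f : E → EReal) (x : E) : Set E :=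
  {v | f x ≠ ⊤ ∧ f x ≠ ⊥ ∧ ∀ ε : ℝ, 0 < ε → ∀ᶠ y in 𝓝 x,
      (((f x).toReal + inner ℝ v (y - x) - ε * ‖y - x‖ : ℝ) : EReal) ≤ f y}

/-- Limiting (Mordukhovich) subdifferential. -/
def lsubd (f : E → EReal) (x : E) : Set E :=
  {v | ∃ xs vs : ℕ → E, Tendsto xs atTop (𝓝 x) ∧
      Tendsto (fun k => f (xs k)) atTop (𝓝 (f x)) ∧
      Tendsto vs atTop (𝓝 v) ∧ ∀ k, vs k ∈ fsubd f (xs k)}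

/-- Sublevel set `{z | f z ≤ a}`. -/
def slev (f : E → EReal) (a : EReal) : Set E := {z | f z ≤ a}

/-- `d(0, ∂ f x)`, with the convention that the distance to the empty set is `∞`. -/
def subdist (f : E → EReal) (x : E) : ℝ≥0∞ := EMetric.infEdist 0 (lsubd f x)

/-- Conversion of an extended real to `ℝ≥0∞` (truncating negative values). -/
def toENN (a : EReal) : ℝ≥0∞ := if a = ⊤ then ⊤ else ENNReal.ofReal a.toReal

/-- Moreau envelope `e_λ f`. -/
def moreauEnv (f : E → EReal) (lam : ℝ) (x : E) : EReal :=
  ⨅ y, f y + ((‖y - x‖ ^ 2 / (2 * lam) : ℝ) : EReal)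

/-- Proximal mapping `P_λ f` (set of minimizers). -/
def proxPts (f : E → EReal) (lam : ℝ) (x : E) : Set E :=
  {y | ∀ z, f y + ((‖y - x‖ ^ 2 / (2 * lam) : ℝ) : EReal)
        ≤ f z + ((‖z - x‖ ^ 2 / (2 * lam) : ℝ) : EReal)}

/-- `f` is prox-bounded. -/
def ProxBdd (f : E → EReal) : Prop := ∃ lam > (0 : ℝ), ∃ x, moreauEnv f lam x ≠ ⊥

/-- Threshold `λ_f` of prox-boundedness. -/
def proxThreshold (f : E → EReal) : ℝ :=
  sSup {lam | 0 < lam ∧ ∃ x, moreauEnv f lam x ≠ ⊥}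

/-- `f` is proper (never `-∞`, somewhere finite). -/
def IsProperFn (f : E → EReal) : Prop := (∃ x, f x ≠ ⊤) ∧ ∀ x, f x ≠ ⊥

/-- Kurdyka–Łojasiewicz property at `xb` with exponent `γ` and constant `μ`. -/
def KLAt (f : E → EReal) (xb : E) (γ μ : ℝ) : Prop :=
  ∃ η > (0:ℝ), ∃ ν > (0:ℝ), ∀ x ∈ Metric.ball xb η,
    f xb < f x → f x < f xb + (ν : EReal) →
    toENN (f x - f xb) ^ γ ≤ ENNReal.ofReal μ * subdist f x

/-- Level-set subdifferential error bound at `xb` with exponent `γ` and constant `μ`. -/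
def LSEBAt (f : E → EReal) (xb : E) (γ μ : ℝ) : Prop :=
  ∃ η > (0:ℝ), ∃ ν > (0:ℝ), ∀ x ∈ Metric.ball xb η,
    f xb < f x → f x < f xb + (ν : EReal) →
    EMetric.infEdist x (slev f (f xb)) ^ γ ≤ ENNReal.ofReal μ * subdist f x

/-- Local Hölder error bound at `xb` with exponent `γ` and constant `μ`. -/
def LHEBAt (f : E → EReal) (xb : E) (γ μ : ℝ) : Prop :=
  ∃ η > (0:ℝ), ∀ x ∈ Metric.ball xb η, f xb < f x →
    EMetric.infEdist x (slev f (f xb)) ^ γ ≤ ENNReal.ofReal μ * toENN (f x - f xb)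

/-- Uniformized KL property on `Ω`. -/
def uKL (f : E → EReal) (Ω : Set E) (γ μ : ℝ) : Prop :=
  ∃ ε > (0:ℝ), ∃ ν > (0:ℝ), ∀ xb ∈ Ω, ∀ x, Metric.infDist x Ω < ε →
    f xb < f x → f x < f xb + (ν : EReal) →
    toENN (f x - f xb) ^ γ ≤ ENNReal.ofReal μ * subdist f x

/-- Uniformized level-set subdifferential error bound on `Ω`. -/
def uLSEB (f : E → EReal) (Ω : Set E) (γ μ : ℝ) : Prop :=
  ∃ ε > (0:ℝ), ∃ ν > (0:ℝ), ∀ xb ∈ Ω, ∀ x, Metric.infDist x Ω < ε →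
    f xb < f x → f x < f xb + (ν : EReal) →
    EMetric.infEdist x (slev f (f xb)) ^ γ ≤ ENNReal.ofReal μ * subdist f x

/-- Uniformized Hölder error bound on `Ω`. -/
def uHEB (f : E → EReal) (Ω : Set E) (γ μ : ℝ) : Prop :=
  ∃ ε > (0:ℝ), ∀ xb ∈ Ω, ∀ x, Metric.infDist x Ω < ε → f xb < f x →
    EMetric.infEdist x (slev f (f xb)) ^ γ ≤ ENNReal.ofReal μ * toENN (f x - f xb)

/-- Prox-regularity of `f` at `xb` for `vb` with constant `ρ`. -/
def ProxRegularAt (f : E → EReal) (xb vb : E) (ρ : ℝ) : Prop :=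
  vb ∈ lsubd f xb ∧ ∃ ε > (0:ℝ), ∀ x v, v ∈ lsubd f x → v ∈ Metric.ball vb ε →
    x ∈ Metric.ball xb ε → f x < f xb + (ε : EReal) → ∀ y ∈ Metric.ball xb ε,
      f x + (((inner ℝ v (y - x) : ℝ) - ρ / 2 * ‖y - x‖ ^ 2 : ℝ) : EReal) ≤ f y

/-! The function has a strict minimum at `0`, so its sublevel set at level `f 0` is `{0}`; yet
its critical points accumulate at `0`, because in the variable `s = 1/x` the derivative changes sign
on every period of `cos s`. At a critical point `0` lies in the limiting subdifferential, so the
right-hand side of the error bound vanishes there while the distance to `{0}` does not. -/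

theorem mem_fsubd_of_hasGradientAt [CompleteSpace E] {f : E → ℝ} {v x : E}
    (hf : HasGradientAt f v x) : v ∈ fsubd (fun y => (f y : EReal)) x := by
  refine ⟨EReal.coe_ne_top _, EReal.coe_ne_bot _, fun ε hε => ?_⟩
  filter_upwards [(hasGradientAt_iff_isLittleO.mp hf).def hε] with y hy
  rw [Real.norm_eq_abs] at hy
  rw [EReal.toReal_coe, EReal.coe_le_coe_iff]
  linarith [neg_abs_le (f y - f x - inner ℝ v (y - x))]

theorem mem_lsubd_of_mem_fsubd {f : E → EReal} {v x : E} (hv : v ∈ fsubd f x) :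
    v ∈ lsubd f x :=
  ⟨fun _ => x, fun _ => v, tendsto_const_nhds, tendsto_const_nhds, tendsto_const_nhds,
    fun _ => hv⟩

theorem subdist_eq_zero_of_hasGradientAt [CompleteSpace E] {f : E → ℝ} {x : E}
    (hf : HasGradientAt f 0 x) : subdist (fun y => (f y : EReal)) x = 0 :=
  Metric.infEDist_zero_of_mem (mem_lsubd_of_mem_fsubd (mem_fsubd_of_hasGradientAt hf))

theorem infEDist_slev_eq_edist_of_forall_lt {X : Type*} [PseudoEMetricSpace X] {f : X → ℝ}
    {x₀ : X} (hf : ∀ x ≠ x₀, f x₀ < f x) (y : X) :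
    Metric.infEDist y (slev (fun x => (f x : EReal)) (f x₀)) = edist y x₀ := by
  have hslev : slev (fun x => (f x : EReal)) (f x₀) = {x₀} := by
    ext x
    simp only [slev, mem_ofPred_eq, mem_singleton_iff, EReal.coe_le_coe_iff]
    exact ⟨fun hx => by_contra fun hne => (hf x hne).not_ge hx, fun hx => hx ▸ le_rfl⟩
  rw [hslev, Metric.infEDist_singleton]

theorem not_lSEBAt_of_tendsto_critical [CompleteSpace E] {f : E → ℝ} {xb : E} {γ : ℝ}
    (hγ : 0 ≤ γ) (μ : ℝ) (hf : ContinuousAt f xb) {xs : ℕ → E}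
    (hxs : Tendsto xs atTop (𝓝 xb)) (hlt : ∀ k, f xb < f (xs k))
    (hcrit : ∀ k, HasGradientAt f 0 (xs k))
    (hdist : ∀ k, 0 < Metric.infEDist (xs k) (slev (fun x => (f x : EReal)) (f xb))) :
    ¬ LSEBAt (fun x => (f x : EReal)) xb γ μ := by
  rintro ⟨η, hη, ν, hν, hLSEB⟩
  have hnear : ∀ᶠ k in atTop, xs k ∈ Metric.ball xb η ∧ f (xs k) < f xb + ν :=
    (hxs.eventually (Metric.ball_mem_nhds xb hη)).and
      ((hf.tendsto.comp hxs).eventually (gt_mem_nhds (lt_add_of_pos_right _ hν)))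
  obtain ⟨k, hball, hsmall⟩ := hnear.exists
  have hbound := hLSEB (xs k) hball (EReal.coe_lt_coe_iff.mpr (hlt k))
    (by exact_mod_cast hsmall : ((f (xs k) : ℝ) : EReal) < (f xb : EReal) + (ν : EReal))
  rw [subdist_eq_zero_of_hasGradientAt (hcrit k), mul_zero, nonpos_iff_eq_zero] at hbound
  exact (ENNReal.rpow_pos_of_nonneg (hdist k) hγ).ne' hbound

/-- The junk value `1 / 0 = 0` makes `oscSq 0 = 0`, the paper's value at `0`. -/
def oscSq (x : ℝ) : ℝ := x ^ 2 * (2 + Real.cos (1 / x))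

@[simp] theorem oscSq_zero : oscSq 0 = 0 := by simp [oscSq]

theorem sq_le_oscSq (x : ℝ) : x ^ 2 ≤ oscSq x := by
  unfold oscSq
  nlinarith [Real.neg_one_le_cos (1 / x), sq_nonneg x]

theorem oscSq_le_three_mul_sq (x : ℝ) : oscSq x ≤ 3 * x ^ 2 := by
  unfold oscSq
  nlinarith [Real.cos_le_one (1 / x), sq_nonneg x]

theorem oscSq_pos {x : ℝ} (hx : x ≠ 0) : 0 < oscSq x :=
  (by positivity : 0 < x ^ 2).trans_le (sq_le_oscSq x)

theorem continuousAt_oscSq_zero : ContinuousAt oscSq 0 := by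
  have hbound : Tendsto (fun x : ℝ => 3 * x ^ 2) (𝓝 0) (𝓝 0) :=
    (by fun_prop : Continuous fun x : ℝ => 3 * x ^ 2).tendsto' 0 0 (by simp)
  rw [ContinuousAt, oscSq_zero]
  exact squeeze_zero (fun x => (sq_nonneg x).trans (sq_le_oscSq x)) oscSq_le_three_mul_sq hbound

theorem hasDerivAt_oscSq {x : ℝ} (hx : x ≠ 0) :
    HasDerivAt oscSq (4 * x + 2 * x * Real.cos (1 / x) + Real.sin (1 / x)) x := by
  have hinv : HasDerivAt (fun y : ℝ => 1 / y) (-(x ^ 2)⁻¹) x := by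
    simpa [one_div] using hasDerivAt_inv hx
  refine ((hasDerivAt_pow 2 x).mul
    (((Real.hasDerivAt_cos _).comp x hinv).const_add 2)).congr_deriv ?_
  simp only [Function.comp_apply]
  field_simp
  ring

open Real in
/-- In the variable `s = 1 / x` the derivative of `oscSq` is `(4 + 2 cos s) / s + sin s`, which is
`6 / s > 0` at `s = 2π(k+1)` and `4 / s - 1 < 0` at `s = 2π(k+1) + 3π/2`. -/
theorem exists_hasDerivAt_oscSq_eq_zero (k : ℕ) :
    ∃ x, 0 < x ∧ x ≤ 1 / (2 * π * (k + 1)) ∧ HasDerivAt oscSq 0 x := by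
  set a := 2 * π * (k + 1)
  set b := a + 3 * π / 2
  set g : ℝ → ℝ := fun s => (4 + 2 * cos s) / s + sin s
  have ha : 0 < a := by positivity
  have hab : a ≤ b := le_add_of_nonneg_right (by positivity)
  have hga : 0 < g a := by
    have hcos : cos a = 1 := by
      rw [show a = ((k + 1 : ℕ) : ℝ) * (2 * π) by push_cast; ring, cos_nat_mul_two_pi]
    have hsin : sin a = 0 := by
      rw [show a = ((2 * (k + 1) : ℕ) : ℝ) * π by push_cast; ring, sin_nat_mul_pi]
    simp only [g, hcos, hsin]
    positivity
  have hgb : g b < 0 := by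
    have hb : b = -(π / 2) + ((k + 2 : ℕ) : ℝ) * (2 * π) := by
      simp only [b, a]; push_cast; ring
    have hcos : cos b = 0 := by rw [hb, cos_add_nat_mul_two_pi, cos_neg, cos_pi_div_two]
    have hsin : sin b = -1 := by rw [hb, sin_add_nat_mul_two_pi, sin_neg, sin_pi_div_two]
    have hb4 : 4 / b < 1 := (div_lt_one (ha.trans_le hab)).mpr <| by
      simp only [b, a]; nlinarith [pi_gt_three, k.cast_nonneg (α := ℝ)]
    simp only [g, hcos, hsin]
    linarith
  have hcont : ContinuousOn g (Icc a b) :=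
    ((by fun_prop : Continuous fun s => 4 + 2 * cos s).continuousOn.div continuousOn_id
      fun s hs => (ha.trans_le hs.1).ne').add continuous_sin.continuousOn
  obtain ⟨s, hs, hgs⟩ := intermediate_value_Icc' hab hcont ⟨hgb.le, hga.le⟩
  have hs0 : 0 < s := ha.trans_le hs.1
  refine ⟨s⁻¹, inv_pos.mpr hs0, by rw [one_div]; exact inv_anti₀ ha hs.1, ?_⟩
  convert hasDerivAt_oscSq (inv_ne_zero hs0.ne') using 1
  rw [one_div, inv_inv, ← hgs]
  simp only [g]
  ring

theorem stmt18 (f : ℝ → ℝ)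
    (h : ∀ x : ℝ, x ≠ 0 → f x = x ^ 2 * (2 + Real.cos (1 / x)))
    (h0 : f 0 = 0) :
    (∀ γ ≥ (0:ℝ), ∀ μ > (0:ℝ), ¬ LSEBAt (fun x => (f x : EReal)) 0 γ μ) ∧
    ∃ xs : ℕ → ℝ, Tendsto xs atTop (𝓝 0) ∧
      ∀ k, xs k ≠ 0 ∧ HasDerivAt f 0 (xs k) ∧
        EMetric.infEdist (xs k) (slev (fun x => (f x : EReal)) ((f 0 : EReal)))
          = ENNReal.ofReal |xs k| := by
  obtain rfl : f = oscSq := funext fun x => by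
    rcases eq_or_ne x 0 with rfl | hx
    · rw [h0, oscSq_zero]
    · exact h x hx
  choose xs hxs_pos hxs_le hxs_crit using exists_hasDerivAt_oscSq_eq_zero
  have hxs : Tendsto xs atTop (𝓝 0) := by
    refine squeeze_zero (fun k => (hxs_pos k).le) hxs_le ?_
    simpa [mul_add, div_eq_mul_inv, mul_comm] using
      (tendsto_one_div_add_atTop_nhds_zero_nat (𝕜 := ℝ)).const_mul (2 * Real.pi)⁻¹
  have hmin : ∀ x ≠ 0, oscSq 0 < oscSq x := fun x hx => by rw [oscSq_zero]; exact oscSq_pos hx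
  have hdist : ∀ k, Metric.infEDist (xs k) (slev (fun x => (oscSq x : EReal)) (oscSq 0))
      = ENNReal.ofReal |xs k| := fun k => by
    rw [infEDist_slev_eq_edist_of_forall_lt hmin, edist_dist, Real.dist_eq, sub_zero]
  refine ⟨fun γ hγ μ _ => ?_, xs, hxs, fun k => ⟨(hxs_pos k).ne', hxs_crit k, hdist k⟩⟩
  refine not_lSEBAt_of_tendsto_critical hγ μ continuousAt_oscSq_zero hxs
    (fun k => hmin _ (hxs_pos k).ne') (fun k => (hxs_crit k).hasGradientAt') fun k => ?_
  rw [hdist, ENNReal.ofReal_pos, abs_pos]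
  exact (hxs_pos k).ne'

end
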